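/- Let A be a finite affine hyperplane arrangement in ℂⁿ and U a small open convex set with Û = U − Σ(A). Then the inclusion Û ↪ M(A) induces an injection on fundamental groups, and moreover π_1(Û) is a retract of π_1(M(A)): there is a homomorphism π_1(M(A)) → π_1(Û) whose composition with the inclusion-induced map is the identity. -/

import Mathlib

open CategoryTheory

abbrev Vc (n : ℕ) := Fin n → ℂ

def IsHyperplane {n : ℕ} (H : AffineSubspace ℂ (Vc n)) : Prop :=
  (H : Set (Vc n)).Nonempty ∧ Module.finrank ℂ H.direction + 1 = n

def arrSing {n : ℕ} (A : Finset (AffineSubspace ℂ (Vc n))) : Set (Vc n) :=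
  ⋃ H ∈ A, (H : Set (Vc n))

noncomputable def interSub {n : ℕ} (s : Finset (AffineSubspace ℂ (Vc n))) :
    AffineSubspace ℂ (Vc n) :=
  sInf (s : Set (AffineSubspace ℂ (Vc n)))

/-- The augmented intersection poset `L̄(A)`: all nonempty intersections of
subfamilies of `A` (the empty subfamily giving the whole space `ℂⁿ = ⊤`). -/
def Lbar {n : ℕ} (A : Finset (AffineSubspace ℂ (Vc n))) : Set (AffineSubspace ℂ (Vc n)) :=
  {G | (∃ s ⊆ A, G = interSub s) ∧ (G : Set (Vc n)).Nonempty}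

/-- `U` is a small open convex set with minimum element `G = Min(U)`:
`U` is open and convex, `G` is the minimum of the set of elements of `L̄(A)`
meeting `U`, and a hyperplane of `A` meets `U` iff it contains `G`. -/
def IsSmallWith {n : ℕ} (A : Finset (AffineSubspace ℂ (Vc n))) (U : Set (Vc n))
    (G : AffineSubspace ℂ (Vc n)) : Prop :=
  IsOpen U ∧ Convex ℝ U ∧ G ∈ Lbar A ∧ ((G : Set (Vc n)) ∩ U).Nonempty ∧
    (∀ G' ∈ Lbar A, ((G' : Set (Vc n)) ∩ U).Nonempty → G ≤ G') ∧
    (∀ H ∈ A, ((H : Set (Vc n)) ∩ U).Nonempty ↔ G ≤ H)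

/-- `U` is a small open convex set with respect to the arrangement `A`. -/
def IsSmall {n : ℕ} (A : Finset (AffineSubspace ℂ (Vc n))) (U : Set (Vc n)) : Prop :=
  ∃ G, IsSmallWith A U G

/-- The homomorphism on fundamental groups induced by a continuous map. -/
noncomputable def piOneMap {X Y : Type} [TopologicalSpace X] [TopologicalSpace Y]
    (f : C(X, Y)) (x : X) : FundamentalGroup X x →* FundamentalGroup Y (f x) :=
  Functor.mapEnd (X := (⟨x⟩ : FundamentalGroupoid X))
    (FundamentalGroupoid.fundamentalGroupoidFunctor.map
      (X := TopCat.of X) (Y := TopCat.of Y) (TopCat.ofHom f))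

/-- The inclusion of `Û = U - Σ(A)` into `M(A) = ℂⁿ - Σ(A)`, as a continuous map. -/
def smallIncl {n : ℕ} (A : Finset (AffineSubspace ℂ (Vc n))) (U : Set (Vc n)) :
    C(↥(U \ arrSing A), ↥(arrSing A)ᶜ) :=
  ⟨fun x => ⟨(x : Vc n), x.2.2⟩, by fun_prop⟩

/-!
Pick a point `p` of `Min(U) ∩ U`. Every hyperplane of `A` that meets `U` contains `Min(U)`, hence `p`,
so moving a point of `M(A)` towards `p` along its ray never meets `Σ(A)` while it stays in `U`.
Shrinking `x ∈ M(A)` towards `p` by a continuous factor that lands it in a ball around `p` inside `U`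
gives a map `r : M(A) → Û`, and the homotopy along the same rays (inside `U` by convexity) shows
`r ∘ i ≃ id` on `Û`. Hence `r_*` is a left inverse of `i_*` on fundamental groups.
-/

namespace FundamentalGroup

open FundamentalGroupoidFunctor

variable {X Y : Type*} [TopologicalSpace X] [TopologicalSpace Y]

theorem map_id_apply (x : X) (a : FundamentalGroup X x) : map (ContinuousMap.id X) x a = a := by
  induction a using Path.Homotopic.Quotient.ind with | mk p => rfl

theorem map_comp_apply {Z : Type*} [TopologicalSpace Z] (g : C(Y, Z)) (f : C(X, Y)) (x : X)
    (a : FundamentalGroup X x) : map (g.comp f) x a = map g (f x) (map f x a) := by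
  induction a using Path.Homotopic.Quotient.ind with | mk p => rfl

theorem map_eq_fundamentalGroupMulEquivOfPath {f g : C(X, Y)} (F : f.Homotopy g) (x : X)
    (a : FundamentalGroup X x) :
    map g x a = fundamentalGroupMulEquivOfPath (F.evalAt x) (map f x a) := by
  let γ : FundamentalGroupoid.mk (f x) ⟶ FundamentalGroupoid.mk (g x) := ⟦F.evalAt x⟧
  have hnat : (map f x a).toArrow ≫ γ = γ ≫ (map g x a).toArrow :=
    (homotopicMapsNatIso F).naturality a
  change _ = Groupoid.inv γ ≫ (map f x a).toArrow ≫ γ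
  rw [Groupoid.inv_eq_inv, IsIso.eq_inv_comp, hnat]

theorem exists_leftInverse_map_of_homotopic {i : C(X, Y)} {r : C(Y, X)}
    (h : (ContinuousMap.id X).Homotopic (r.comp i)) (x : X) :
    ∃ ρ : FundamentalGroup Y (i x) →* FundamentalGroup X x, ρ.comp (map i x) = MonoidHom.id _ := by
  obtain ⟨F⟩ := h
  refine ⟨(fundamentalGroupMulEquivOfPath (F.evalAt x)).symm.toMonoidHom.comp (map r (i x)), ?_⟩
  ext a
  have hconj := map_eq_fundamentalGroupMulEquivOfPath F x a
  rw [map_comp_apply, map_id_apply] at hconj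
  change (fundamentalGroupMulEquivOfPath (F.evalAt x)).symm (map r (i x) (map i x a)) = a
  rw [hconj]
  exact MulEquiv.symm_apply_apply _ a

end FundamentalGroup

section RadialRetraction

variable {E : Type*} [NormedAddCommGroup E] [NormedSpace ℝ E]

open AffineMap

theorem exists_continuous_lineMap_mem_of_mem_nhds {U : Set E} {p : E} (hU : U ∈ nhds p) :
    ∃ t : E → ℝ, Continuous t ∧ (∀ x, t x ∈ Set.Ioc 0 1) ∧ ∀ x, lineMap p x (t x) ∈ U := by
  obtain ⟨δ, hδ, hball⟩ := Metric.mem_nhds_iff.mp hU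
  have hden : ∀ x : E, 0 < δ + dist p x := fun x => by positivity
  refine ⟨fun x => δ / (δ + dist p x), ?_, fun x => ⟨by positivity, ?_⟩, fun x => hball ?_⟩
  · exact continuous_const.div (by fun_prop) fun x => (hden x).ne'
  · rw [div_le_one (hden x)]
    linarith [dist_nonneg (x := p) (y := x)]
  · rw [Metric.mem_ball, dist_lineMap_left, Real.norm_of_nonneg (by positivity), div_mul_eq_mul_div,
      div_lt_iff₀ (hden x)]
    nlinarith [dist_nonneg (x := p) (y := x)]

theorem exists_homotopic_retraction_of_convex {U S : Set E} (hUo : IsOpen U) (hUc : Convex ℝ U)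
    {p : E} (hp : p ∈ U)
    (hS : ∀ x ∉ S, ∀ c ∈ Set.Ioc (0 : ℝ) 1, lineMap p x c ∈ U → lineMap p x c ∉ S) :
    ∃ r : C(↥Sᶜ, ↥(U \ S)), (ContinuousMap.id _).Homotopic
      (r.comp (ContinuousMap.inclusion (Set.sdiff_subset_compl U S))) := by
  obtain ⟨t, ht, htI, htU⟩ := exists_continuous_lineMap_mem_of_mem_nhds (hUo.mem_nhds hp)
  have hmem : ∀ x ∉ S, ∀ c ∈ Set.Ioc (0 : ℝ) 1, lineMap p x c ∈ U → lineMap p x c ∈ U \ S :=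
    fun x hx c hc hxU => ⟨hxU, hS x hx c hc hxU⟩
  have hseg : ∀ (s : unitInterval) (x : ↥(U \ S)),
      lineMap p (x : E) (lineMap 1 (t x) (s : ℝ)) ∈ U \ S := by
    intro s x
    have hc : lineMap 1 (t x) (s : ℝ) ∈ Set.Ioc (0 : ℝ) 1 :=
      (convex_Ioc 0 1).lineMap_mem ⟨one_pos, le_rfl⟩ (htI x) s.2
    exact hmem x x.2.2 _ hc (hUc.lineMap_mem hp x.2.1 (Set.Ioc_subset_Icc_self hc))
  refine ⟨⟨fun x => ⟨lineMap p (x : E) (t x), hmem x x.2 _ (htI x) (htU x)⟩, by fun_prop⟩,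
    ⟨{ toFun := fun q => ⟨lineMap p (q.2 : E) (lineMap 1 (t q.2) (q.1 : ℝ)), hseg q.1 q.2⟩
       continuous_toFun := by fun_prop
       map_zero_left := fun x => by ext; simp
       map_one_left := fun x =>
        Subtype.ext (congrArg (lineMap p (x : E)) (lineMap_apply_one _ _)) }⟩⟩

end RadialRetraction

theorem AffineSubspace.lineMap_mem_iff {k R V : Type*} [Field k] [Field R] [Algebra R k]
    [AddCommGroup V] [Module k V] [Module R V] [IsScalarTower R k V] {H : AffineSubspace k V}
    {p : V} (hp : p ∈ H) (x : V) {c : R} (hc : c ≠ 0) :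
    AffineMap.lineMap p x c ∈ H ↔ x ∈ H := by
  rw [AffineMap.lineMap_apply, vadd_mem_iff_mem_direction _ hp, ← algebraMap_smul k c,
    Submodule.smul_mem_iff _ ((map_ne_zero (algebraMap R k)).mpr hc),
    vsub_right_mem_direction_iff_mem hp]

theorem IsSmallWith.lineMap_notMem_arrSing {n : ℕ} {A : Finset (AffineSubspace ℂ (Vc n))}
    {U : Set (Vc n)} {G : AffineSubspace ℂ (Vc n)} (hU : IsSmallWith A U G) {p : Vc n}
    (hp : p ∈ G) {x : Vc n} (hx : x ∉ arrSing A) {c : ℝ} (hc : c ≠ 0)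
    (hcU : AffineMap.lineMap p x c ∈ U) : AffineMap.lineMap p x c ∉ arrSing A := by
  obtain ⟨-, -, -, -, -, hmeet⟩ := hU
  simp only [arrSing, Set.mem_iUnion₂, not_exists] at hx ⊢
  intro H hHA hcH
  have hpH : p ∈ H := (hmeet H hHA).mp ⟨_, hcH, hcU⟩ hp
  exact hx H hHA ((AffineSubspace.lineMap_mem_iff hpH x hc).mp hcH)

theorem stmt12_general {n : ℕ} (A : Finset (AffineSubspace ℂ (Vc n)))
    (U : Set (Vc n)) (hU : IsSmall A U)
    (x₀ : ↥(U \ arrSing A)) :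
    Function.Injective (piOneMap (smallIncl A U) x₀) ∧
      ∃ r : FundamentalGroup (↥(arrSing A)ᶜ) (smallIncl A U x₀) →*
          FundamentalGroup (↥(U \ arrSing A)) x₀,
        r.comp (piOneMap (smallIncl A U) x₀) = MonoidHom.id _ := by
  obtain ⟨G, hsmall⟩ := hU
  obtain ⟨p, hpG, hpU⟩ := hsmall.2.2.2.1
  obtain ⟨r, hr⟩ := exists_homotopic_retraction_of_convex hsmall.1 hsmall.2.1 hpU
    fun x hx c hc => hsmall.lineMap_notMem_arrSing hpG hx hc.1.ne'
  -- `piOneMap` is `FundamentalGroup.map` and `smallIncl A U` is `ContinuousMap.inclusion _`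
  obtain ⟨ρ, hρ⟩ := FundamentalGroup.exists_leftInverse_map_of_homotopic hr x₀
  exact ⟨Function.LeftInverse.injective (g := ρ) (DFunLike.congr_fun hρ), ρ, hρ⟩

/-- **Statement 12.** Let `U` be a small open convex set for the affine arrangement `A`
and `Û = U - Σ(A)`.  Then the inclusion `Û ↪ M(A)` induces an injection on fundamental
groups, and `π₁(Û)` is a retract of `π₁(M(A))`: there is a homomorphism
`π₁(M(A)) → π₁(Û)` whose composition with the inclusion-induced map is the identity. -/
theorem stmt12 {n : ℕ} (A : Finset (AffineSubspace ℂ (Vc n)))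
    (hA : ∀ H ∈ A, IsHyperplane H) (U : Set (Vc n)) (hU : IsSmall A U)
    (x₀ : ↥(U \ arrSing A)) :
    Function.Injective (piOneMap (smallIncl A U) x₀) ∧
      ∃ r : FundamentalGroup (↥(arrSing A)ᶜ) (smallIncl A U x₀) →*
          FundamentalGroup (↥(U \ arrSing A)) x₀,
        r.comp (piOneMap (smallIncl A U) x₀) = MonoidHom.id _ :=
  stmt12_general A U hU x₀
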